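/- arXiv:2401.16925 — 6 statements merged into one kernel-verified Lean document; each statement's English description precedes it below -/
import Mathlib

section
/- Let λ, a, c ∈ ℝ and ω₀, ω₁, ω₂ ∈ ℝ. With F_ω(s,t) = λ²t + ω(λ(c+as) + aω) and φ(τ, v, ω₀) the solution of s' = ω₀, t' = λt + ω₀(c+as) starting at v, one has F_{ω₁}(φ(τ,v,ω₀)) − F_{ω₂}(φ(τ,v,ω₀)) = aω₀(ω₁−ω₂)λτ + F_{ω₁}(v) − F_{ω₂}(v) for all τ ∈ ℝ and v ∈ ℝ². -/
theorem eq_add_smul_of_hasDerivAt_const {E : Type*} [NormedAddCommGroup E] [NormedSpace ℝ E]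
    {f : ℝ → E} {c : E} (hf : ∀ t, HasDerivAt f c t) (t : ℝ) : f t = f 0 + t • c := by
  have hg : ∀ t, HasDerivAt (fun t => f t - t • c) 0 t := fun t => by
    have := (hf t).sub ((hasDerivAt_id' t).smul_const c)
    rwa [one_smul, sub_self] at this
  have := is_const_of_deriv_eq_zero (fun t => (hg t).differentiableAt) (fun t => (hg t).deriv) t 0
  simp only [zero_smul, sub_zero] at this
  rw [← this, sub_add_cancel]

/-- With F_ω(s,t) = λ²t + ω(λ(c+as) + aω) and φ the solution of
s' = ω₀, t' = λt + ω₀(c+as) starting at v: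
F_{ω₁}(φ(τ)) − F_{ω₂}(φ(τ)) = aω₀(ω₁−ω₂)λτ + F_{ω₁}(v) − F_{ω₂}(v). -/
theorem stmt7 (a c lam ω₀ ω₁ ω₂ : ℝ) (v : ℝ × ℝ)
    (φ : ℝ → ℝ × ℝ) (h0 : φ 0 = v)
    (hode : ∀ τ : ℝ,
      HasDerivAt φ (ω₀, lam * (φ τ).2 + ω₀ * (c + a * (φ τ).1)) τ)
    (F : ℝ → ℝ × ℝ → ℝ)
    (hF : ∀ ω : ℝ, ∀ p : ℝ × ℝ,
      F ω p = lam ^ 2 * p.2 + ω * (lam * (c + a * p.1) + a * ω)) :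
    ∀ τ : ℝ,
      F ω₁ (φ τ) - F ω₂ (φ τ) =
        a * ω₀ * (ω₁ - ω₂) * lam * τ + F ω₁ v - F ω₂ v := by
  intro τ
  have hs : (φ τ).1 = v.1 + τ * ω₀ := by
    simpa [h0] using eq_add_smul_of_hasDerivAt_const (fun t => (hode t).fst) τ
  -- the `lam ^ 2 * t` terms cancel, so only `s = (φ τ).1` survives in the difference
  simp only [hF, hs]
  ring
end

section
/- For λ < 0, the function f : ℝ → ℝ defined by f(τ) = (e^{λτ} − λτ − 1)/τ² for τ ≠ 0 and f(0) = λ²/2 is continuous and strictly decreasing on ℝ. -/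
/-!
Writing `φ₂(z) = ∫₀¹ (1 - s) e^{sz} ds` (the second φ-function of exponential integrators), one has
`φ₂(z) = (e^z - z - 1) / z²` for `z ≠ 0` and `φ₂(0) = 1/2`, so `f(τ) = λ² φ₂(λτ)`. The integral form
makes `φ₂` continuous, and strictly increasing because the integrand increases with `z` for every
`s ∈ [0, 1]`; precomposing with `τ ↦ λτ`, `λ < 0`, turns this into strict decrease.
-/

open Real intervalIntegral

noncomputable def phi2 (z : ℝ) : ℝ := ∫ s in (0 : ℝ)..1, (1 - s) * exp (s * z)

theorem continuous_phi2 : Continuous phi2 :=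
  continuous_parametric_intervalIntegral_of_continuous' (by fun_prop) 0 1

theorem strictMono_phi2 : StrictMono phi2 := by
  intro x y hxy
  apply integral_lt_integral_of_continuousOn_of_le_of_exists_lt zero_lt_one
    (by fun_prop) (by fun_prop)
  · intro s hs
    exact mul_le_mul_of_nonneg_left (exp_le_exp.2 (mul_le_mul_of_nonneg_left hxy.le hs.1.le))
      (sub_nonneg.2 hs.2)
  · refine ⟨1 / 2, by norm_num, ?_⟩
    gcongr

theorem phi2_zero : phi2 0 = 1 / 2 := by
  simp [phi2, integral_comp_sub_left fun s => s]

theorem phi2_of_ne_zero {z : ℝ} (hz : z ≠ 0) : phi2 z = (exp z - z - 1) / z ^ 2 := by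
  have hprimitive : ∀ s ∈ Set.uIcc (0 : ℝ) 1,
      HasDerivAt (fun s => ((1 - s) / z + 1 / z ^ 2) * exp (s * z)) ((1 - s) * exp (s * z)) s := by
    intro s _
    have h := ((((hasDerivAt_id s).const_sub 1).div_const z).add_const (1 / z ^ 2)).mul
      ((hasDerivAt_mul_const z).exp)
    refine h.congr_deriv ?_
    simp only [id_eq]
    field_simp
    ring
  rw [phi2, integral_eq_sub_of_hasDerivAt hprimitive
    (by apply Continuous.intervalIntegrable; fun_prop)]
  simp only [one_mul, zero_mul, exp_zero, sub_zero, sub_self, zero_div, zero_add, mul_one]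
  field_simp
  ring

/-- For λ < 0, f(τ) = (e^{λτ} − λτ − 1)/τ² (with f(0) = λ²/2) is continuous
and strictly decreasing on ℝ. -/
theorem stmt9 (lam : ℝ) (hlam : lam < 0) (f : ℝ → ℝ)
    (hf : ∀ τ : ℝ, f τ =
      if τ = 0 then lam ^ 2 / 2 else (Real.exp (lam * τ) - lam * τ - 1) / τ ^ 2) :
    Continuous f ∧ StrictAnti f := by
  have hf_eq : f = fun τ => lam ^ 2 * phi2 (lam * τ) := by
    funext τ
    rw [hf τ]
    split_ifs with hτ
    · rw [hτ, mul_zero, phi2_zero]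
      ring
    · have hlam0 : lam ≠ 0 := hlam.ne
      rw [phi2_of_ne_zero (mul_ne_zero hlam0 hτ)]
      field_simp
  subst hf_eq
  refine ⟨continuous_const.mul (continuous_phi2.comp (continuous_const_mul lam)), ?_⟩
  intro a b hab
  exact mul_lt_mul_of_pos_left (strictMono_phi2 (mul_lt_mul_of_neg_left hab hlam))
    (sq_pos_of_neg hlam)
end

section
/- Let λ < 0, a > 0, c ∈ ℝ, and ω⁻ < 0 < ω⁺ with ω⁻, ω⁺ ∈ [ω⁻, ω⁺] =: Ω. Define C⁻ = {v : F_{ω⁻}(v) < 0 and F_{ω⁺}(v) < 0} where F_ω(s,t) = λ²t + ω(λ(c+as) + aω). If v ∈ C⁻, then for every constant control ω̂ ∈ Ω and every τ < 0, the solution φ(τ, v, ω̂) of s' = ω̂, t' = λt + ω̂(c+as) remains in C⁻. -/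
/-!
Write `u_ω(τ) = F_ω(φ τ)`. Along the flow, `u_ω' = μ u_ω + g` with `μ = λω̂/ω` and
`g = λ · ((ω - ω̂)/ω) · u_0`, and `u_ω̂' = λ u_ω̂` exactly. Each time the forcing `g` is
nonnegative on `τ ≤ 0`, `u e^{-μτ}` is monotone there, so negativity at `τ = 0` propagates
backwards. Since `ω ↦ F_ω(v)` is a convex quadratic, `F_ω(v) < 0` for all `ω ∈ Ω`, in particular
for `ω̂` and `0`. This gives `u_ω̂ < 0`, then `u_0 = λ² t` increasing (`u_0' = λ u_ω̂ - λaω̂² > 0`)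
hence `u_0 < 0`, and finally `g ≥ 0` for `ω = ω^±`, which is where `ω̂ ∈ Ω` enters.
-/

open Real Set

theorem neg_of_hasDerivAt_eq_mul_add {u g : ℝ → ℝ} {μ t₀ : ℝ}
    (hu : ∀ τ, HasDerivAt u (μ * u τ + g τ) τ) (hg : ∀ τ ≤ t₀, 0 ≤ g τ) (ht₀ : u t₀ < 0)
    {τ : ℝ} (hτ : τ ≤ t₀) : u τ < 0 := by
  have hw : ∀ x, HasDerivAt (fun x => u x * exp (-(μ * x))) (g x * exp (-(μ * x))) x := by
    intro x
    have hexp : HasDerivAt (fun x => exp (-(μ * x))) (exp (-(μ * x)) * -(μ * 1)) x :=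
      ((hasDerivAt_id x).const_mul μ).neg.exp
    exact ((hu x).mul hexp).congr_deriv (by ring)
  have hmono : MonotoneOn (fun x => u x * exp (-(μ * x))) (Iic t₀) :=
    monotoneOn_of_hasDerivWithinAt_nonneg (convex_Iic t₀)
      (fun x _ => (hw x).continuousAt.continuousWithinAt) (fun x _ => (hw x).hasDerivWithinAt)
      (fun x hx => mul_nonneg (hg x (interior_subset (s := Iic t₀) hx)) (exp_pos _).le)
  have hle := hmono hτ self_mem_Iic hτ
  have hneg : u τ * exp (-(μ * τ)) < 0 :=
    hle.trans_lt (mul_neg_of_neg_of_pos ht₀ (exp_pos _))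
  exact neg_of_mul_neg_left hneg (exp_pos _).le

namespace ConstControl

def F (a c lam ω : ℝ) (p : ℝ × ℝ) : ℝ :=
  lam ^ 2 * p.2 + ω * (lam * (c + a * p.1) + a * ω)

theorem F_neg_of_mem_Icc {a c lam ωm ωp ω : ℝ} {v : ℝ × ℝ} (ha : 0 ≤ a)
    (hm : F a c lam ωm v < 0) (hp : F a c lam ωp v < 0) (hω : ω ∈ Icc ωm ωp) :
    F a c lam ω v < 0 := by
  unfold F at *
  obtain ⟨h1, h2⟩ := hω
  rcases h1.eq_or_lt with rfl | h1
  · exact hm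
  -- `(ωp - ωm) F_ω = (ωp - ω) F_ωm + (ω - ωm) F_ωp - a (ω - ωm)(ωp - ω)(ωp - ωm)`
  nlinarith [mul_nonneg (sub_nonneg.2 h2) (neg_pos.2 hm).le, mul_pos (sub_pos.2 h1) (neg_pos.2 hp),
    mul_nonneg (mul_nonneg (mul_nonneg ha (sub_pos.2 h1).le) (sub_nonneg.2 h2))
      (sub_pos.2 (h1.trans_le h2)).le]

section Flow

variable {a c lam ωhat : ℝ} {φ : ℝ → ℝ × ℝ}

theorem hasDerivAt_F_comp
    (hode : ∀ τ, HasDerivAt φ (ωhat, lam * (φ τ).2 + ωhat * (c + a * (φ τ).1)) τ)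
    (ω τ : ℝ) :
    HasDerivAt (fun τ => F a c lam ω (φ τ))
      (lam ^ 2 * (lam * (φ τ).2 + ωhat * (c + a * (φ τ).1)) + ω * (lam * (a * ωhat))) τ := by
  have hs : HasDerivAt (fun τ => (φ τ).1) ωhat τ := (hode τ).fst
  have ht : HasDerivAt (fun τ => (φ τ).2) (lam * (φ τ).2 + ωhat * (c + a * (φ τ).1)) τ :=
    (hode τ).snd
  exact (ht.const_mul _).add
    ((((hs.const_mul a).const_add c).const_mul lam).add_const (a * ω) |>.const_mul ω)

variable (hode : ∀ τ, HasDerivAt φ (ωhat, lam * (φ τ).2 + ωhat * (c + a * (φ τ).1)) τ)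
include hode

theorem F_self_comp_neg (h0 : F a c lam ωhat (φ 0) < 0) {τ : ℝ} (hτ : τ ≤ 0) :
    F a c lam ωhat (φ τ) < 0 := by
  refine neg_of_hasDerivAt_eq_mul_add (u := fun τ => F a c lam ωhat (φ τ)) (μ := lam)
    (g := 0) (fun τ => ?_) (fun _ _ => le_rfl) h0 hτ
  convert hasDerivAt_F_comp hode ωhat τ using 1
  simp only [F, Pi.zero_apply]
  ring

theorem F_zero_comp_neg (hlam : lam < 0) (ha : 0 ≤ a) (h0 : F a c lam 0 (φ 0) < 0)
    (hhat : F a c lam ωhat (φ 0) < 0) {τ : ℝ} (hτ : τ ≤ 0) :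
    F a c lam 0 (φ τ) < 0 := by
  refine neg_of_hasDerivAt_eq_mul_add (u := fun τ => F a c lam 0 (φ τ)) (μ := 0)
    (g := fun τ => lam * F a c lam ωhat (φ τ) - lam * a * ωhat ^ 2) (fun τ => ?_)
    (fun σ hσ => ?_) h0 hτ
  · convert hasDerivAt_F_comp hode 0 τ using 1
    simp only [F]
    ring
  · have := F_self_comp_neg hode hhat hσ
    nlinarith [mul_nonneg (mul_nonneg (neg_pos.2 hlam).le ha) (sq_nonneg ωhat)]

theorem F_comp_neg (hlam : lam < 0) {ω : ℝ} (hω : ω ≠ 0) (hωhat : 0 ≤ (ω - ωhat) / ω)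
    (hF0 : ∀ τ ≤ 0, F a c lam 0 (φ τ) < 0) (h0 : F a c lam ω (φ 0) < 0) {τ : ℝ} (hτ : τ ≤ 0) :
    F a c lam ω (φ τ) < 0 := by
  refine neg_of_hasDerivAt_eq_mul_add (u := fun τ => F a c lam ω (φ τ)) (μ := lam * ωhat / ω)
    (g := fun τ => (ω - ωhat) / ω * (lam * F a c lam 0 (φ τ))) (fun τ => ?_)
    (fun σ hσ => mul_nonneg hωhat (mul_pos_of_neg_of_neg hlam (hF0 σ hσ)).le) h0 hτ
  convert hasDerivAt_F_comp hode ω τ using 1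
  simp only [F]
  field_simp
  ring

end Flow

end ConstControl

open ConstControl in
/-- Negative-time invariance of C⁻ = {v : F_{ω⁻}(v) < 0 ∧ F_{ω⁺}(v) < 0} for the
system s' = ω̂, t' = λt + ω̂(c+as) with constant control ω̂ ∈ Ω = [ω⁻, ω⁺]. -/
theorem stmt11 (a c lam ωm ωp ωhat : ℝ) (hlam : lam < 0) (ha : 0 < a)
    (hωm : ωm < 0) (hωp : 0 < ωp) (hωhat : ωhat ∈ Set.Icc ωm ωp)
    (F : ℝ → ℝ × ℝ → ℝ)
    (hF : ∀ ω : ℝ, ∀ p : ℝ × ℝ,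
      F ω p = lam ^ 2 * p.2 + ω * (lam * (c + a * p.1) + a * ω))
    (v : ℝ × ℝ) (hv : F ωm v < 0 ∧ F ωp v < 0)
    (φ : ℝ → ℝ × ℝ) (h0 : φ 0 = v)
    (hode : ∀ τ : ℝ,
      HasDerivAt φ (ωhat, lam * (φ τ).2 + ωhat * (c + a * (φ τ).1)) τ) :
    ∀ τ : ℝ, τ < 0 → F ωm (φ τ) < 0 ∧ F ωp (φ τ) < 0 := by
  intro τ hτ
  obtain rfl : F = ConstControl.F a c lam := funext₂ hF
  subst h0
  obtain ⟨hm, hp⟩ := hv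
  have hΩ {ω : ℝ} (hω : ω ∈ Icc ωm ωp) := F_neg_of_mem_Icc ha.le hm hp hω
  have hF0 (σ : ℝ) (hσ : σ ≤ 0) : ConstControl.F a c lam 0 (φ σ) < 0 :=
    F_zero_comp_neg hode hlam ha.le (hΩ ⟨hωm.le, hωp.le⟩) (hΩ hωhat) hσ
  refine ⟨F_comp_neg hode hlam hωm.ne ?_ hF0 hm hτ.le, F_comp_neg hode hlam hωp.ne' ?_ hF0 hp hτ.le⟩
  · exact div_nonneg_of_nonpos (by linarith [hωhat.1]) hωm.le
  · exact div_nonneg (by linarith [hωhat.2]) hωp.le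
end

section
/- Let λ < 0, a > 0, c ∈ ℝ, and ω₁ < 0 < ω₂. Suppose v₁ ∈ ℝ² satisfies F_{ω₁}(v₁) > 0 and F_{ω₂}(v₁) < 0, where F_ω(s,t) = λ²t + ω(λ(c+as)+aω). Then the function γ(τ) = F_{ω₂}(φ(τ, v₁, ω₁)) = aω₁(ω₂−ω₁)λτ + F_{ω₂}(v₁) + (e^{λτ}−1)F_{ω₁}(v₁) has exactly two zeros, one positive and one negative. -/
/-!
Write `A = F ω₁ v₁ > 0`, `B = F ω₂ v₁ < 0` and `K = a ω₁ (ω₂ - ω₁) λ > 0`, so that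
`γ τ = K τ + (B - A) + A e^{λτ}`. Since `λ ≠ 0` and `A > 0`, `γ` is strictly convex; it tends to
`+∞` at `+∞` through its linear part and at `-∞` through its exponential part, and `γ 0 = B < 0`.
A continuous function with these properties has a zero on each side of `0` by the intermediate
value theorem, and strict convexity forbids two zeros on the same side: the one nearer to `0`
would lie strictly between two points where `γ ≤ 0`.
-/

open Set Filter Real

lemma StrictConvexOn.apply_neg_of_mem_Ioo {f : ℝ → ℝ} {s : Set ℝ} (hf : StrictConvexOn ℝ s f)
    {x y z : ℝ} (hx : x ∈ s) (hz : z ∈ s) (hy : y ∈ Ioo x z) (hfx : f x ≤ 0) (hfz : f z ≤ 0) :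
    f y < 0 := by
  have hxz : x < z := hy.1.trans hy.2
  calc f y < max (f x) (f z) :=
        hf.lt_on_openSegment hx hz hxz.ne (by rwa [openSegment_eq_Ioo hxz])
    _ ≤ 0 := max_le hfx hfz

theorem StrictConvexOn.exists_zeros_of_tendsto_atTop {f : ℝ → ℝ}
    (hf : StrictConvexOn ℝ univ f) {z : ℝ} (hz : f z < 0)
    (htop : Tendsto f atTop atTop) (hbot : Tendsto f atBot atTop) :
    ∃ p n : ℝ, z < p ∧ n < z ∧ f p = 0 ∧ f n = 0 ∧ ∀ x, f x = 0 → x = p ∨ x = n := by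
  have hcont : ContinuousOn f univ := by
    simpa using hf.convexOn.continuousOn_interior
  obtain ⟨p, hzp, hfp⟩ := intermediate_value_Ioi (hcont.mono (subset_univ _)) htop hz
  obtain ⟨n, hnz, hfn⟩ := intermediate_value_Iio' (hcont.mono (subset_univ _)) hbot hz
  have neg_between {x y w : ℝ} (hy : y ∈ Ioo x w) (hfx : f x ≤ 0) (hfw : f w ≤ 0) : f y < 0 :=
    hf.apply_neg_of_mem_Ioo trivial trivial hy hfx hfw
  refine ⟨p, n, hzp, hnz, hfp, hfn, fun x hx => ?_⟩
  rcases lt_trichotomy x z with hxz | rfl | hzx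
  · refine .inr (le_antisymm (not_lt.1 fun h => ?_) (not_lt.1 fun h => ?_))
    · exact (neg_between ⟨h, hxz⟩ hfn.le hz.le).ne hx
    · exact (neg_between ⟨h, hnz⟩ hx.le hz.le).ne hfn
  · exact absurd hx hz.ne
  · refine .inl (le_antisymm (not_lt.1 fun h => ?_) (not_lt.1 fun h => ?_))
    · exact (neg_between ⟨hzp, h⟩ hz.le hx.le).ne hfp
    · exact (neg_between ⟨hzx, h⟩ hz.le hfp.le).ne hx

lemma strictConvexOn_linear_add_mul_exp (K C : ℝ) {A lam : ℝ} (hA : 0 < A) (hlam : lam ≠ 0) :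
    StrictConvexOn ℝ univ fun τ => K * τ + C + A * exp (lam * τ) := by
  refine ⟨convex_univ, fun x _ y _ hxy a b ha hb hab => ?_⟩
  have hexp := strictConvexOn_exp.2 trivial trivial (mul_left_injective₀ hlam |>.ne hxy) ha hb hab
  simp only [smul_eq_mul] at hexp ⊢
  rw [show lam * (a * x + b * y) = a * (x * lam) + b * (y * lam) by ring, mul_comm lam x,
    mul_comm lam y]
  linear_combination mul_lt_mul_of_pos_left hexp hA - C * hab

lemma tendsto_linear_add_mul_exp_atTop (C : ℝ) {K A : ℝ} (hK : 0 < K) (hA : 0 < A) (lam : ℝ) :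
    Tendsto (fun τ => K * τ + C + A * exp (lam * τ)) atTop atTop :=
  tendsto_atTop_mono (fun τ => le_add_of_nonneg_right (by positivity))
    ((tendsto_id.const_mul_atTop hK).atTop_add tendsto_const_nhds)

lemma tendsto_linear_add_mul_exp_atBot (K C : ℝ) {A lam : ℝ} (hA : 0 < A) (hlam : lam < 0) :
    Tendsto (fun τ => K * τ + C + A * exp (lam * τ)) atBot atTop := by
  -- in the variable `x = λτ → +∞` the function is `x ((A eˣ + C) / x + K / λ)`
  have hx : Tendsto (fun x => x * ((A * exp x + C) / x ^ 1 + K / lam)) atTop atTop :=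
    tendsto_id.atTop_mul_atTop₀
      ((tendsto_mul_exp_add_div_pow_atTop A C 1 hA).atTop_add tendsto_const_nhds)
  have hcongr : (fun x => x * ((A * exp x + C) / x ^ 1 + K / lam)) =ᶠ[atTop]
      fun x => K * (x / lam) + C + A * exp (lam * (x / lam)) := by
    filter_upwards [eventually_gt_atTop 0] with x hx
    rw [mul_div_cancel₀ x hlam.ne]
    field_simp
    ring
  refine ((hx.congr' hcongr).comp (tendsto_id.const_mul_atBot_of_neg hlam)).congr fun τ => ?_
  simp [mul_div_cancel_left₀ τ hlam.ne]

theorem stmt12_general (a lam ω₁ ω₂ : ℝ) (hlam : lam < 0) (ha : 0 < a)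
    (hω₁ : ω₁ < 0) (hω₂ : 0 < ω₂)
    (F : ℝ → ℝ × ℝ → ℝ)
    (v₁ : ℝ × ℝ) (hv₁pos : 0 < F ω₁ v₁) (hv₁neg : F ω₂ v₁ < 0)
    (γ : ℝ → ℝ)
    (hγ : ∀ τ : ℝ, γ τ = a * ω₁ * (ω₂ - ω₁) * lam * τ + F ω₂ v₁ +
      (Real.exp (lam * τ) - 1) * F ω₁ v₁) :
    ∃ τp τn : ℝ, 0 < τp ∧ τn < 0 ∧ γ τp = 0 ∧ γ τn = 0 ∧
      ∀ τ : ℝ, γ τ = 0 → τ = τp ∨ τ = τn := by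
  set K := a * ω₁ * (ω₂ - ω₁) * lam
  have hK : 0 < K := mul_pos_of_neg_of_neg
    (mul_neg_of_neg_of_pos (mul_neg_of_pos_of_neg ha hω₁) (by linarith)) hlam
  have hγ' : γ = fun τ => K * τ + (F ω₂ v₁ - F ω₁ v₁) + F ω₁ v₁ * exp (lam * τ) := by
    funext τ
    rw [hγ]
    ring
  have hγ0 : γ 0 < 0 := by simpa [hγ] using hv₁neg
  rw [hγ'] at hγ0 ⊢
  exact (strictConvexOn_linear_add_mul_exp _ _ hv₁pos hlam.ne).exists_zeros_of_tendsto_atTop hγ0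
    (tendsto_linear_add_mul_exp_atTop _ hK hv₁pos lam)
    (tendsto_linear_add_mul_exp_atBot _ _ hv₁pos hlam)

/-- For λ < 0, a > 0, ω₁ < 0 < ω₂ and v₁ with F_{ω₁}(v₁) > 0, F_{ω₂}(v₁) < 0,
the function γ(τ) = aω₁(ω₂−ω₁)λτ + F_{ω₂}(v₁) + (e^{λτ}−1)F_{ω₁}(v₁)
has exactly two zeros, one positive and one negative. -/
theorem stmt12 (a c lam ω₁ ω₂ : ℝ) (hlam : lam < 0) (ha : 0 < a)
    (hω₁ : ω₁ < 0) (hω₂ : 0 < ω₂)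
    (F : ℝ → ℝ × ℝ → ℝ)
    (hF : ∀ ω : ℝ, ∀ p : ℝ × ℝ,
      F ω p = lam ^ 2 * p.2 + ω * (lam * (c + a * p.1) + a * ω))
    (v₁ : ℝ × ℝ) (hv₁pos : 0 < F ω₁ v₁) (hv₁neg : F ω₂ v₁ < 0)
    (γ : ℝ → ℝ)
    (hγ : ∀ τ : ℝ, γ τ = a * ω₁ * (ω₂ - ω₁) * lam * τ + F ω₂ v₁ +
      (Real.exp (lam * τ) - 1) * F ω₁ v₁) :
    ∃ τp τn : ℝ, 0 < τp ∧ τn < 0 ∧ γ τp = 0 ∧ γ τn = 0 ∧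
      ∀ τ : ℝ, γ τ = 0 → τ = τp ∨ τ = τn :=
  stmt12_general a lam ω₁ ω₂ hlam ha hω₁ hω₂ F v₁ hv₁pos hv₁neg γ hγ
end

section
/- Let b ≠ 0, α, a ∈ ℝ, and fix σ ∈ ℝ such that σα + ωb > 0 for all ω in a compact interval Ω. Define G(s,t) = 6σt − 6(a/b)σs² + 2s³. Along any solution of s' = ωb, t' = αs² + 2aωs with constant control ω ∈ Ω, one has d/dτ G(s(τ),t(τ)) = 6(σα + ωb)s(τ)², which is nonnegative and vanishes only when s(τ) = 0. -/
/-- For b ≠ 0 and σ with σα + ωb > 0 for all ω ∈ Ω = [ω⁻, ω⁺], with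
G(s,t) = 6σt − 6(a/b)σs² + 2s³: along any solution of s' = ωb, t' = αs² + 2aωs
with constant control ω ∈ Ω, d/dτ G(s(τ),t(τ)) = 6(σα + ωb)s(τ)², which is
nonnegative and vanishes only when s(τ) = 0. -/
theorem stmt14 (a b α σ ωm ωp ω : ℝ) (hb : b ≠ 0)
    (hσ : ∀ w ∈ Set.Icc ωm ωp, 0 < σ * α + w * b) (hω : ω ∈ Set.Icc ωm ωp)
    (G : ℝ × ℝ → ℝ)
    (hGdef : ∀ p : ℝ × ℝ,
      G p = 6 * σ * p.2 - 6 * (a / b) * σ * p.1 ^ 2 + 2 * p.1 ^ 3)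
    (s t : ℝ → ℝ)
    (hodes : ∀ τ : ℝ, HasDerivAt s (ω * b) τ)
    (hodet : ∀ τ : ℝ, HasDerivAt t (α * (s τ) ^ 2 + 2 * a * ω * s τ) τ) :
    ∀ τ : ℝ,
      HasDerivAt (fun τ => G (s τ, t τ)) (6 * (σ * α + ω * b) * (s τ) ^ 2) τ ∧
      0 ≤ 6 * (σ * α + ω * b) * (s τ) ^ 2 ∧
      (6 * (σ * α + ω * b) * (s τ) ^ 2 = 0 ↔ s τ = 0) := by
  intro τ
  have hpos := hσ ω hω
  have hne : 6 * (σ * α + ω * b) ≠ 0 := by positivity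
  refine ⟨?_, by positivity, ?_⟩
  · simp only [hGdef]
    have h1 : HasDerivAt (fun τ => 6 * σ * t τ - 6 * (a / b) * σ * (s τ) ^ 2 + 2 * (s τ) ^ 3)
        (6 * σ * (α * (s τ) ^ 2 + 2 * a * ω * s τ)
          - 6 * (a / b) * σ * (2 * s τ ^ 1 * (ω * b))
          + 2 * (3 * s τ ^ 2 * (ω * b))) τ := by
      exact (((hodet τ).const_mul _).sub ((((hodes τ).pow 2)).const_mul _)).add
        (((hodes τ).pow 3).const_mul _)
    convert h1 using 1
    field_simp
    ring
  · constructor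
    · intro h
      have : (s τ) ^ 2 = 0 := by
        rcases mul_eq_zero.mp h with h' | h'
        · exact absurd h' hne
        · exact h'
      exact pow_eq_zero_iff (by norm_num) |>.mp this
    · intro h; rw [h]; ring
end

section
/- Consider the flow φ_τ(v,z) = (e^{τA}v, ⟨e^{τ·tr A} Λ_τ^{A − (tr A)I} η, v⟩ + z·e^{τ·tr A}) on ℍ = ℝ² × ℝ, where Λ_τ^B η = ∫₀^τ e^{sBᵀ} η ds. Then each φ_τ is an automorphism of the Heisenberg group, i.e., φ_τ((v₁,z₁)∗(v₂,z₂)) = φ_τ(v₁,z₁) ∗ φ_τ(v₂,z₂), and φ_{τ+σ} = φ_τ ∘ φ_σ. -/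
open NormedSpace Matrix

/-- The Heisenberg product on ℍ = ℝ² × ℝ, with ℝ² modeled as Fin 2 → ℝ and
θ the rotation by π/2. -/
noncomputable def Hmul (g h : (Fin 2 → ℝ) × ℝ) : (Fin 2 → ℝ) × ℝ :=
  (g.1 + h.1,
    g.2 + h.2 + (1 / 2) * (g.1 ⬝ᵥ (!![0, -1; 1, 0] : Matrix (Fin 2) (Fin 2) ℝ).mulVec h.1))

/-- The flow φ_τ(v,z) = (e^{τA}v, ⟨e^{τ·tr A} Λ_τ^{A−(tr A)I} η, v⟩ + z e^{τ·tr A}),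
where Λ_τ^B η = ∫₀^τ e^{sBᵀ}η ds. -/
noncomputable def flow (A : Matrix (Fin 2) (Fin 2) ℝ) (η : Fin 2 → ℝ) (τ : ℝ)
    (g : (Fin 2 → ℝ) × ℝ) : (Fin 2 → ℝ) × ℝ :=
  ((exp (τ • A)).mulVec g.1,
    (Real.exp (τ * A.trace) •
        ∫ u in (0:ℝ)..τ, (exp (u • (A - A.trace • (1 : Matrix (Fin 2) (Fin 2) ℝ))ᵀ)).mulVec η) ⬝ᵥ g.1
      + g.2 * Real.exp (τ * A.trace))

/-!
For a 2×2 matrix, conjugation by θ turns Aᵀ into (tr A)I − A. Hence B = (A − (tr A)I)ᵀ satisfies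
Bθ = −θA, so e^{τB}θ = θe^{−τA}, and since e^{τA}ᵀ = e^{τ tr A}e^{τB} we get
e^{τA}ᵀ θ e^{τA} = e^{τ tr A} θ: the symplectic form ⟨·, θ·⟩ is scaled by e^{τ tr A}, exactly as
the central coordinate is, which makes φ_τ a homomorphism. The flow property comes from the same
formula for e^{σA}ᵀ together with the cocycle identity Λ_{τ+σ} = Λ_σ + e^{σB}Λ_τ, obtained by
splitting the integral at σ and shifting.
-/

namespace Matrix

variable {n : Type*} [Fintype n] [DecidableEq n]

theorem exp_smul_one (r : ℝ) : exp (r • (1 : Matrix n n ℝ)) = Real.exp r • 1 := by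
  open scoped Matrix.Norms.Operator in
  rw [smul_one_eq_diagonal, exp_diagonal, Pi.exp_def, ← Real.exp_eq_exp_ℝ, ← smul_one_eq_diagonal]

theorem exp_add_smul (s t : ℝ) (A : Matrix n n ℝ) :
    exp ((s + t) • A) = exp (s • A) * exp (t • A) := by
  rw [add_smul, exp_add_of_commute _ _ (((Commute.refl A).smul_left s).smul_right t)]

theorem continuous_exp_smul (B : Matrix n n ℝ) : Continuous fun u : ℝ => exp (u • B) := by
  open scoped Matrix.Norms.Operator in
  exact exp_continuous.comp (continuous_id.smul continuous_const)

theorem transpose_exp_smul (σ : ℝ) (A : Matrix n n ℝ) :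
    (exp (σ • A))ᵀ = Real.exp (σ * A.trace) • exp (σ • (A - A.trace • 1)ᵀ) := by
  have hsplit : (σ • A)ᵀ = (σ * A.trace) • 1 + σ • (A - A.trace • 1)ᵀ := by
    simp only [transpose_sub, transpose_smul, transpose_one, smul_sub, smul_smul]
    abel
  rw [← exp_transpose, hsplit, exp_add_of_commute _ _ ((Commute.one_left _).smul_left _),
    exp_smul_one, smul_mul_assoc, one_mul]

theorem integral_exp_smul_mulVec_add (B : Matrix n n ℝ) (η : n → ℝ) (τ σ : ℝ) :
    ∫ u in (0 : ℝ)..τ + σ, exp (u • B) *ᵥ η =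
      (∫ u in (0 : ℝ)..σ, exp (u • B) *ᵥ η) + exp (σ • B) *ᵥ ∫ u in (0 : ℝ)..τ, exp (u • B) *ᵥ η := by
  have hcont : Continuous fun u : ℝ => exp (u • B) *ᵥ η :=
    (continuous_exp_smul B).matrix_mulVec continuous_const
  have hshift : ∫ u in σ..τ + σ, exp (u • B) *ᵥ η = ∫ u in (0 : ℝ)..τ, exp ((u + σ) • B) *ᵥ η := by
    rw [intervalIntegral.integral_comp_add_right (fun u => exp (u • B) *ᵥ η), zero_add, add_comm]
  have hpull := (LinearMap.toContinuousLinearMap (exp (σ • B)).mulVecLin).intervalIntegral_comp_comm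
    (hcont.intervalIntegrable (μ := MeasureTheory.volume) 0 τ)
  rw [← intervalIntegral.integral_add_adjacent_intervals (hcont.intervalIntegrable 0 σ)
    (hcont.intervalIntegrable σ (τ + σ)), hshift]
  simp only [add_comm _ σ, exp_add_smul σ, ← mulVec_mulVec]
  simpa using hpull

end Matrix

local notation "θ" => (!![0, -1; 1, 0] : Matrix (Fin 2) (Fin 2) ℝ)

theorem isUnit_rot : IsUnit θ := by
  simp [isUnit_iff_isUnit_det, det_fin_two_of]

theorem transpose_sub_trace_mul_rot (A : Matrix (Fin 2) (Fin 2) ℝ) :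
    (A - A.trace • 1)ᵀ * θ = θ * -A := by
  ext i j
  fin_cases i <;> fin_cases j <;> simp [mul_apply, Fin.sum_univ_two, trace_fin_two]

theorem exp_smul_transpose_sub_trace_mul_rot (A : Matrix (Fin 2) (Fin 2) ℝ) (τ : ℝ) :
    exp (τ • (A - A.trace • 1)ᵀ) * θ = θ * exp (-(τ • A)) := by
  have hdet := (isUnit_iff_isUnit_det _).mp isUnit_rot
  have hconj : τ • (A - A.trace • 1)ᵀ = θ * -(τ • A) * θ⁻¹ := by
    rw [← mul_nonsing_inv_cancel_right _ (τ • (A - A.trace • 1)ᵀ) hdet, smul_mul_assoc,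
      transpose_sub_trace_mul_rot, ← smul_neg, mul_smul_comm]
  rw [hconj, exp_conj _ _ isUnit_rot, nonsing_inv_mul_cancel_right _ _ hdet]

theorem exp_smul_transpose_mul_rot_mul_exp_smul (A : Matrix (Fin 2) (Fin 2) ℝ) (τ : ℝ) :
    (exp (τ • A))ᵀ * θ * exp (τ • A) = Real.exp (τ * A.trace) • θ := by
  rw [transpose_exp_smul, smul_mul_assoc, smul_mul_assoc, exp_smul_transpose_sub_trace_mul_rot,
    mul_assoc, ← Matrix.exp_add_of_commute _ _ (Commute.refl (τ • A)).neg_left, neg_add_cancel,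
    exp_zero, mul_one]

theorem dotProduct_rot_mulVec_exp_smul (A : Matrix (Fin 2) (Fin 2) ℝ) (τ : ℝ) (v w : Fin 2 → ℝ) :
    exp (τ • A) *ᵥ v ⬝ᵥ θ *ᵥ (exp (τ • A) *ᵥ w) = Real.exp (τ * A.trace) * (v ⬝ᵥ θ *ᵥ w) := by
  rw [dotProduct_comm, ← dotProduct_transpose_mulVec, mulVec_mulVec, mulVec_mulVec,
    exp_smul_transpose_mul_rot_mul_exp_smul, smul_mulVec, dotProduct_smul, smul_eq_mul]

theorem flow_Hmul (A : Matrix (Fin 2) (Fin 2) ℝ) (η : Fin 2 → ℝ) (τ : ℝ) (g h : (Fin 2 → ℝ) × ℝ) :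
    flow A η τ (Hmul g h) = Hmul (flow A η τ g) (flow A η τ h) := by
  ext : 1
  · simp [flow, Hmul, mulVec_add]
  · simp only [flow, Hmul, dotProduct_rot_mulVec_exp_smul, dotProduct_add]
    ring

theorem flow_add (A : Matrix (Fin 2) (Fin 2) ℝ) (η : Fin 2 → ℝ) (τ σ : ℝ) (g : (Fin 2 → ℝ) × ℝ) :
    flow A η (τ + σ) g = flow A η τ (flow A η σ g) := by
  ext : 1
  · simp only [flow, exp_add_smul, ← mulVec_mulVec]
  · have hdual : (∫ u in (0 : ℝ)..τ, exp (u • (A - A.trace • 1)ᵀ) *ᵥ η) ⬝ᵥ exp (σ • A) *ᵥ g.1 =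
        Real.exp (σ * A.trace) * (exp (σ • (A - A.trace • 1)ᵀ) *ᵥ
          ∫ u in (0 : ℝ)..τ, exp (u • (A - A.trace • 1)ᵀ) *ᵥ η) ⬝ᵥ g.1 := by
      rw [← dotProduct_transpose_mulVec, transpose_exp_smul, smul_mulVec, dotProduct_smul,
        smul_eq_mul, dotProduct_comm]
    simp only [flow, integral_exp_smul_mulVec_add, smul_dotProduct, add_dotProduct, hdual,
      add_mul, Real.exp_add, smul_eq_mul]
    ring

/-- Each φ_τ is an automorphism of the Heisenberg group, and τ ↦ φ_τ is a flow. -/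
theorem stmt18 (A : Matrix (Fin 2) (Fin 2) ℝ) (η : Fin 2 → ℝ) :
    (∀ τ : ℝ, ∀ g h : (Fin 2 → ℝ) × ℝ,
      flow A η τ (Hmul g h) = Hmul (flow A η τ g) (flow A η τ h)) ∧
    (∀ τ σ : ℝ, ∀ g : (Fin 2 → ℝ) × ℝ,
      flow A η (τ + σ) g = flow A η τ (flow A η σ g)) :=
  ⟨flow_Hmul A η, flow_add A η⟩
end
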